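/- arXiv:2010.08042 — 3 statements merged into one kernel-verified Lean document; each statement's English description precedes it below -/
import Mathlib

section
/- The canonical skew binary representation of every natural number is unique. -/
/-- Value denoted by a list of skew binary digits (index `i` of the list is the
digit at position `i+1`, worth `2^(i+1) - 1`). -/
def skewVal (l : List ℕ) : ℕ :=
  ∑ i ∈ Finset.range l.length, l.getD i 0 * (2 ^ (i + 1) - 1)

/-- A digit list is canonical skew binary if every digit is at most `2` and a
digit equal to `2` has only zeros below it (it is the lowest-order nonzero digit). -/
def CanonicalSkew (l : List ℕ) : Prop :=
  (∀ i, l.getD i 0 ≤ 2) ∧ (∀ i, l.getD i 0 = 2 → ∀ j < i, l.getD j 0 = 0)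

def sval (f : ℕ → ℕ) (m : ℕ) : ℕ := ∑ i ∈ Finset.range m, f i * (2 ^ (i + 1) - 1)

def Canon (f : ℕ → ℕ) : Prop :=
  (∀ i, f i ≤ 2) ∧ (∀ i, f i = 2 → ∀ j < i, f j = 0)

lemma sval_bound (f : ℕ → ℕ) (hf : Canon f) : ∀ m, sval f m ≤ 2 ^ (m + 1) - 2 := by
  intro m
  induction m with
  | zero => simp [sval]
  | succ m ih =>
    have hstep : sval f (m + 1) = sval f m + f m * (2 ^ (m + 1) - 1) :=
      Finset.sum_range_succ _ _
    have hle : f m ≤ 2 := hf.1 m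
    have hpow : (1 : ℕ) ≤ 2 ^ (m + 1) := Nat.one_le_two_pow
    have hpow2 : (2 : ℕ) ^ (m + 2) = 2 * 2 ^ (m + 1) := by ring
    interval_cases h : f m
    · omega
    · omega
    · have hz : sval f m = 0 := by
        apply Finset.sum_eq_zero
        intro i hi
        rw [hf.2 m h i (Finset.mem_range.mp hi)]
        ring
      omega

lemma sval_unique : ∀ m (f g : ℕ → ℕ), Canon f → Canon g →
    sval f m = sval g m → ∀ i < m, f i = g i := by
  intro m
  induction m with
  | zero => intro f g _ _ _ i hi; omega
  | succ m ih =>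
    intro f g hf hg hv i hi
    have hfstep : sval f (m + 1) = sval f m + f m * (2 ^ (m + 1) - 1) :=
      Finset.sum_range_succ _ _
    have hgstep : sval g (m + 1) = sval g m + g m * (2 ^ (m + 1) - 1) :=
      Finset.sum_range_succ _ _
    rw [hfstep, hgstep] at hv
    have hbf := sval_bound f hf m
    have hbg := sval_bound g hg m
    have hpow : (2 : ℕ) ≤ 2 ^ (m + 1) := Nat.one_lt_two_pow_iff.mpr (by omega)
    have hlef : f m ≤ 2 := hf.1 m
    have hleg : g m ≤ 2 := hg.1 m
    have hz : ∀ (h : ℕ → ℕ), Canon h → h m = 2 → sval h m = 0 := by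
      intro h hh h2
      apply Finset.sum_eq_zero
      intro j hj
      rw [hh.2 m h2 j (Finset.mem_range.mp hj)]
      ring
    by_cases hf2 : f m = 2
    · have hzf := hz f hf hf2
      have hg2 : g m = 2 := by
        rw [hf2, hzf] at hv
        by_contra hne
        have hleg1 : g m ≤ 1 := by omega
        interval_cases hgm : g m <;> omega
      rcases Nat.lt_succ_iff_lt_or_eq.mp hi with hlt | heq
      · rw [hf.2 m hf2 i hlt, hg.2 m hg2 i hlt]
      · rw [heq, hf2, hg2]
    · by_cases hg2 : g m = 2
      · have hzg := hz g hg hg2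
        rw [hg2, hzg] at hv
        have hlef1 : f m ≤ 1 := by omega
        exfalso
        interval_cases hfm : f m <;> omega
      · have hlef1 : f m ≤ 1 := by omega
        have hleg1 : g m ≤ 1 := by omega
        have key : f m = g m ∧ sval f m = sval g m := by
          interval_cases hfm : f m <;> interval_cases hgm : g m <;>
            exact ⟨by omega, by omega⟩
        rcases Nat.lt_succ_iff_lt_or_eq.mp hi with hlt | heq
        · exact ih f g hf hg key.2 i hlt
        · rw [heq]; exact key.1

lemma sval_of_list (l : List ℕ) (m : ℕ) (h : l.length ≤ m) :
    sval (fun i => l.getD i 0) m = skewVal l := by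
  unfold sval skewVal
  symm
  apply Finset.sum_subset (Finset.range_subset_range.mpr h)
  intro i _ hi
  rw [List.getD_eq_default]
  · ring
  · simpa using Finset.mem_range.not.mp hi

/-- The canonical skew binary representation of a natural number is unique
(up to leading zeros): two canonical representations of the same number have
the same digit at every position. -/
theorem stmt9 (l1 l2 : List ℕ) (h1 : CanonicalSkew l1) (h2 : CanonicalSkew l2)
    (hv : skewVal l1 = skewVal l2) : ∀ i, l1.getD i 0 = l2.getD i 0 := by
  intro i
  set m := max (max l1.length l2.length) (i + 1) with hm
  have hv' : sval (fun i => l1.getD i 0) m = sval (fun i => l2.getD i 0) m := by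
    rw [sval_of_list l1 m (by omega), sval_of_list l2 m (by omega), hv]
  exact sval_unique m _ _ ⟨h1.1, h1.2⟩ ⟨h2.1, h2.2⟩ hv' i (by omega)
end

section
/- Incrementing a canonical skew binary number requires at most one carry: if m has canonical skew binary representation α, then the canonical representation of m+1 differs from α as follows — if the lowest-order nonzero digit of α is 2 at position i, then that digit becomes 0 and the digit at position i+1 is increased by 1; otherwise the digit at position 1 is increased by 1. In both cases the result is again canonical. -/
/-- Value of the digits `f 0, ..., f (M-1)` (digit `f i` is at position `i+1`,
worth `2^(i+1) - 1`). -/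
def skewValF (f : ℕ → ℕ) (M : ℕ) : ℕ :=
  ∑ i ∈ Finset.range M, f i * (2 ^ (i + 1) - 1)

/-- Canonical skew binary digit sequence: all digits at most `2`, and a digit `2`
has only zeros below it (it is the lowest-order nonzero digit). -/
def CanonicalSkewF (f : ℕ → ℕ) : Prop :=
  (∀ i, f i ≤ 2) ∧ (∀ i, f i = 2 → ∀ j < i, f j = 0)

/-- Incrementing a canonical skew binary number needs at most one carry:
if the lowest-order nonzero digit is a `2` at position `i`, set it to `0` and
increase the digit at position `i+1` by one; otherwise increase the lowest digit
by one. In both cases the result is canonical and denotes `m + 1`. -/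
theorem stmt10 (f : ℕ → ℕ) (N : ℕ) (hsupp : ∀ i, N ≤ i → f i = 0)
    (hcan : CanonicalSkewF f) :
    (∀ i, f i = 2 →
      CanonicalSkewF (Function.update (Function.update f i 0) (i + 1) (f (i + 1) + 1)) ∧
      ∀ M, N + 2 ≤ M →
        skewValF (Function.update (Function.update f i 0) (i + 1) (f (i + 1) + 1)) M
          = skewValF f M + 1) ∧
    ((∀ i, f i ≠ 2) →
      CanonicalSkewF (Function.update f 0 (f 0 + 1)) ∧
      ∀ M, N + 2 ≤ M →
        skewValF (Function.update f 0 (f 0 + 1)) M = skewValF f M + 1) := by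
  obtain ⟨hle, h2⟩ := hcan
  constructor
  · intro i hfi
    have hzero : ∀ j < i, f j = 0 := h2 i hfi
    have hi1 : f (i + 1) ≤ 1 := by
      rcases Nat.lt_or_ge (f (i + 1)) 2 with h | h
      · omega
      · have he : f (i + 1) = 2 := by have := hle (i + 1); omega
        have := h2 (i + 1) he i (by omega)
        omega
    have hiN : i < N := by
      by_contra h
      have := hsupp i (by omega)
      omega
    constructor
    · constructor
      · intro k
        rcases eq_or_ne k (i + 1) with rfl | hk1
        · simp [Function.update_apply]; omega
        · rcases eq_or_ne k i with rfl | hk2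
          · simp [Function.update_apply, hk1]
          · simp [Function.update_apply, hk1, hk2]; exact hle k
      · intro k hk j hj
        rcases eq_or_ne k (i + 1) with rfl | hk1
        · rcases eq_or_ne j i with rfl | hj1
          · simp [Function.update_apply]
          · have hj2 : j ≠ i + 1 := by omega
            simp [Function.update_apply, hj1, hj2]
            exact hzero j (by omega)
        · exfalso
          rw [Function.update_apply, if_neg hk1] at hk
          rcases eq_or_ne k i with rfl | hk2
          · simp [Function.update_apply] at hk
          · rw [Function.update_apply, if_neg hk2] at hk
            rcases Nat.lt_or_ge k i with h | h
            · have := hzero k h; omega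
            · have hik : i < k := by omega
              have := h2 k hk i hik
              omega
    · intro M hM
      have hiM : i ∈ Finset.range M := Finset.mem_range.mpr (by omega)
      have hi1M : i + 1 ∈ Finset.range M := Finset.mem_range.mpr (by omega)
      have e1 : ∀ h : ℕ → ℕ, ∑ k ∈ Finset.range M, h k
          = h (i + 1) + (h i + ∑ k ∈ ((Finset.range M).erase (i + 1)).erase i, h k) := by
        intro h
        rw [Finset.add_sum_erase _ h (Finset.mem_erase.mpr ⟨by omega, hiM⟩),
          Finset.add_sum_erase _ h hi1M]
      unfold skewValF
      rw [e1 (fun k => Function.update (Function.update f i 0) (i + 1) (f (i + 1) + 1) k * (2 ^ (k + 1) - 1)),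
        e1 (fun k => f k * (2 ^ (k + 1) - 1))]
      have hR : ∑ k ∈ ((Finset.range M).erase (i + 1)).erase i,
          Function.update (Function.update f i 0) (i + 1) (f (i + 1) + 1) k * (2 ^ (k + 1) - 1)
          = ∑ k ∈ ((Finset.range M).erase (i + 1)).erase i, f k * (2 ^ (k + 1) - 1) := by
        apply Finset.sum_congr rfl
        intro k hk
        simp only [Finset.mem_erase] at hk
        rw [Function.update_apply, if_neg hk.2.1, Function.update_apply, if_neg hk.1]
      rw [hR]
      simp only [Function.update_apply, Function.update_self, hfi, if_true, eq_self_iff_true]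
      rw [if_neg (by omega : ¬ i = i + 1)]
      have h1 : (1 : ℕ) ≤ 2 ^ (i + 1) := Nat.one_le_two_pow
      have h2' : (2 : ℕ) ^ (i + 1 + 1) = 2 * 2 ^ (i + 1) := by rw [pow_succ]; ring
      rw [add_mul, one_mul, h2']
      have hw : 2 * 2 ^ (i + 1) - 1 = 2 * (2 ^ (i + 1) - 1) + 1 := by omega
      rw [hw]
      ring_nf
  · intro hne
    constructor
    · constructor
      · intro k
        rcases eq_or_ne k 0 with rfl | hk
        · simp [Function.update_apply]
          have := hle 0
          have := hne 0
          omega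
        · simp [Function.update_apply, hk]; exact hle k
      · intro k hk j hj
        rcases eq_or_ne k 0 with rfl | hk0
        · omega
        · rw [Function.update_apply, if_neg hk0] at hk
          exact absurd hk (hne k)
    · intro M hM
      have h0M : (0 : ℕ) ∈ Finset.range M := Finset.mem_range.mpr (by omega)
      unfold skewValF
      rw [← Finset.add_sum_erase _ _ h0M, ← Finset.add_sum_erase _ _ h0M]
      have hR : ∑ k ∈ (Finset.range M).erase 0,
          Function.update f 0 (f 0 + 1) k * (2 ^ (k + 1) - 1)
          = ∑ k ∈ (Finset.range M).erase 0, f k * (2 ^ (k + 1) - 1) := by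
        apply Finset.sum_congr rfl
        intro k hk
        simp only [Finset.mem_erase] at hk
        rw [Function.update_apply, if_neg hk.1]
      rw [hR]
      simp [Function.update_self]
      ring
end

section
/- Let D be a shared DAG over alphabet Σ and abelian ordered group G, and define m(v) for each vertex v as the minimum priority among all paths from v to ⊥ (with m(⊥) = 0, the group identity). If each edge (u, a, g, v) is relabeled with priority g ⊕ m(v), then for every vertex u ≠ ⊥, the path of minimum total priority from u can be found greedily: following from u the outgoing edge of minimum relabeled priority, and recursing, yields a path ρ whose original total priority g_ρ equals m(u), and moreover the relabeled priority of the first chosen edge equals m(u). -/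
/-- Paths in an edge-labeled DAG: `IsPath E bot v l` holds when `l` is the list
of (letter, priority) labels of a path from `v` to the sink `bot` along edges of
`E` (an edge `E u a g v` goes from `u` to `v` with label `a ∈ Σ ∪ {ε}`, where
`none` stands for `ε`, and priority `g`). -/
inductive IsPath {V A G : Type} (E : V → Option A → G → V → Prop) (bot : V) :
    V → List (Option A × G) → Prop where
  | nil : IsPath E bot bot []
  | cons {u : V} {a : Option A} {g : G} {v : V} {l : List (Option A × G)} :
      E u a g v → IsPath E bot v l → IsPath E bot u ((a, g) :: l)

/-- The word defined by a path: the concatenation of its non-`ε` letters. -/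
def pathWord {A G : Type} (l : List (Option A × G)) : List A :=
  (l.map Prod.fst).filterMap id

/-- The priority of a path: the sum of its edge priorities. -/
def pathPrio {A G : Type} [AddCommMonoid G] (l : List (Option A × G)) : G :=
  (l.map Prod.snd).sum

/-- Greedy paths: at each vertex, follow an outgoing edge minimizing the
relabeled priority `g ⊕ m(target)`. -/
inductive GreedyPath {V A G : Type} [AddCommGroup G] [LinearOrder G]
    (E : V → Option A → G → V → Prop) (bot : V) (m : V → G) :
    V → List (Option A × G) → Prop where
  | nil : GreedyPath E bot m bot []
  | cons {u : V} {a : Option A} {g : G} {v : V} {l : List (Option A × G)} :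
      E u a g v →
      (∀ (a' : Option A) (g' : G) (v' : V), E u a' g' v' → g + m v ≤ g' + m v') →
      GreedyPath E bot m v l →
      GreedyPath E bot m u ((a, g) :: l)

/-- If `m v` is the minimum priority over all paths from `v` to `⊥` (with
`m ⊥ = 0`) and each edge `(u,a,g,v)` is relabeled with `g ⊕ m v`, then greedily
following minimum relabeled edges yields a path whose original total priority is
`m u`, and the relabeled priority of the first chosen edge equals `m u`. -/
theorem stmt16 {V A G : Type} [AddCommGroup G] [LinearOrder G]
    (hmono : ∀ a b c : G, a ≤ b → a + c ≤ b + c)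
    (E : V → Option A → G → V → Prop) (bot : V)
    (hbot : ∀ (a : Option A) (g : G) (v : V), ¬ E bot a g v)
    (m : V → G) (hmbot : m bot = 0)
    (hleast : ∀ v : V, IsLeast {x : G | ∃ l, IsPath E bot v l ∧ pathPrio l = x} (m v)) :
    (∀ (u : V) (l : List (Option A × G)), GreedyPath E bot m u l → pathPrio l = m u) ∧
    (∀ (u : V) (a : Option A) (g : G) (v : V) (l : List (Option A × G)),
      E u a g v →
      (∀ (a' : Option A) (g' : G) (v' : V), E u a' g' v' → g + m v ≤ g' + m v') →
      GreedyPath E bot m v l → g + m v = m u) := by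
  -- edge bound: m u ≤ g + m v for any edge
  have hedge : ∀ (u : V) (a : Option A) (g : G) (v : V), E u a g v → m u ≤ g + m v := by
    intro u a g v he
    obtain ⟨⟨l, hl, hp⟩, _⟩ := hleast v
    have : IsPath E bot u ((a, g) :: l) := IsPath.cons he hl
    exact (hleast u).2 ⟨(a, g) :: l, this, by simp [pathPrio, ← hp]⟩
  -- key: under minimality, g + m v = m u
  have key : ∀ (u : V) (a : Option A) (g : G) (v : V), E u a g v →
      (∀ (a' : Option A) (g' : G) (v' : V), E u a' g' v' → g + m v ≤ g' + m v') →
      g + m v = m u := by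
    intro u a g v he hmin
    refine le_antisymm ?_ (hedge u a g v he)
    obtain ⟨⟨l, hl, hp⟩, _⟩ := hleast u
    cases hl with
    | nil => exact absurd he (hbot a g v)
    | @cons _ a' g' v' l' he' hl' =>
      have h1 : m v' ≤ pathPrio l' := (hleast v').2 ⟨l', hl', rfl⟩
      have h2 : g' + m v' ≤ g' + pathPrio l' := by
        rw [add_comm g' (m v'), add_comm g' (pathPrio l')]
        exact hmono _ _ _ h1
      calc g + m v ≤ g' + m v' := hmin a' g' v' he'
        _ ≤ g' + pathPrio l' := h2
        _ = m u := by simpa [pathPrio] using hp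
  constructor
  · intro u l h
    induction h with
    | nil => simp [pathPrio, hmbot]
    | cons he hmin _ ih =>
      rw [← key _ _ _ _ he hmin]
      simp [pathPrio, ih]
      simp [pathPrio] at ih; rw [ih]
  · intro u a g v l he hmin _
    exact key u a g v he hmin
end
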